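/- Among all ordered trees r-isomorphic to a given rooted tree R, the one with the lexicographically largest weight sequence is canonically ordered, and its weight sequence equals the canonical weight sequence cws(R). -/

import Mathlib

/-!
If the weight sequence of `M` is maximal among the trees r-isomorphic to it, then `M` is
canonically ordered: a strict increase in the weight sequence of one child strictly increases the
weight sequence of the whole tree, so two adjacent children out of order could be swapped, and a
child that is not itself maximal could be replaced, to increase `ws M`. Conversely, two
r-isomorphic canonically ordered trees have equal weight sequences: by induction their children
have the same weight sequences up to permutation, and both lists are sorted decreasingly.
-/

inductive OTree : Type
  | node : List OTree → OTree

namespace OTree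

def size : OTree → ℕ
  | .node cs => (cs.attach.map (fun c => size c.1)).sum + 1
decreasing_by simp only [OTree.node.sizeOf_spec]; have := List.sizeOf_lt_of_mem c.2; omega

def ws : OTree → List ℕ
  | .node cs => size (.node cs) :: (cs.attach.map (fun c => ws c.1)).flatten
decreasing_by simp only [OTree.node.sizeOf_spec]; have := List.sizeOf_lt_of_mem c.2; omega

def preorder : OTree → List OTree
  | .node cs => .node cs :: (cs.attach.map (fun c => preorder c.1)).flatten
decreasing_by simp only [OTree.node.sizeOf_spec]; have := List.sizeOf_lt_of_mem c.2; omega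

lemma size_pos (R : OTree) : 0 < R.size := by
  cases R with | node cs => simp only [OTree.size]; omega

end OTree

inductive RIso : OTree → OTree → Prop
  | node {cs cs' : List OTree} (l : List OTree) (hp : l.Perm cs')
      (hlen : cs.length = l.length)
      (h : ∀ (i : ℕ) (h1 : i < cs.length) (h2 : i < l.length), RIso cs[i] l[i]) :
      RIso (.node cs) (.node cs')

inductive Canonical : OTree → Prop
  | node {cs : List OTree}
      (hchain : List.Chain' (fun u v => OTree.ws v ≤ OTree.ws u) cs)
      (h : ∀ c ∈ cs, Canonical c) : Canonical (.node cs)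

def Centroidal {V : Type} [Fintype V] (G : SimpleGraph V) (u : V) : Prop :=
  ∀ v : ↥{x : V | x ≠ u},
    2 * Nat.card {w : ↥{x : V | x ≠ u} | (G.induce {x : V | x ≠ u}).Reachable v w}
      ≤ Fintype.card V

def IsParent (w : List ℕ) (i j : ℕ) : Prop :=
  i < j ∧ j < i + w.getD i 0 ∧ ∀ k, i < k → k < j → ¬ (j < k + w.getD k 0)

def graphOf (R : OTree) : SimpleGraph (Fin R.size) :=
  SimpleGraph.fromRel (fun i j => IsParent R.ws i.1 j.1)

def rootIdx (R : OTree) : Fin R.size := ⟨0, R.size_pos⟩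

def B (n : ℕ) : Set (List ℕ) := {s | ∃ R : OTree, Canonical R ∧ R.size = n ∧ R.ws = s}

def Succeq (s t : List ℕ) : Prop := t ≤ s ∨ s <+: t

def A (q n : ℕ) : Set (List ℕ × List ℕ) :=
  {p | p.1 ∈ B q ∧ p.2 ∈ B (n - q) ∧ Succeq p.1 p.2.tail}

def FwsUni {V : Type} [Fintype V] (G : SimpleGraph V) (s : List ℕ) : Prop :=
  ∃ R : OTree, Canonical R ∧ R.ws = s ∧
    ∃ f : graphOf R ≃g G, Centroidal G (f (rootIdx R))

def FwsBi {V : Type} [Fintype V] (G : SimpleGraph V) (s : List ℕ) : Prop :=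
  ∃ u v, u ≠ v ∧ G.Adj u v ∧ Centroidal G u ∧ Centroidal G v ∧
  ∃ A B : OTree, Canonical A ∧ Canonical B ∧ B.ws ≤ A.ws ∧ s = A.ws ++ B.ws ∧
  ∃ (fA : graphOf A ≃g (G.deleteEdges {s(u,v)}).induce
        {x | (G.deleteEdges {s(u,v)}).Reachable u x})
    (fB : graphOf B ≃g (G.deleteEdges {s(u,v)}).induce
        {x | (G.deleteEdges {s(u,v)}).Reachable v x}),
    (fA (rootIdx A)).1 = u ∧ (fB (rootIdx B)).1 = v

namespace List

variable {α β γ : Type*}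

theorem Forall₂.imp_of_mem {R S : α → β → Prop} {l₁ : List α} {l₂ : List β}
    (H : ∀ a ∈ l₁, ∀ b ∈ l₂, R a b → S a b) (h : Forall₂ R l₁ l₂) : Forall₂ S l₁ l₂ := by
  induction h with
  | nil => exact .nil
  | cons hab _ ih =>
    exact .cons (H _ mem_cons_self _ mem_cons_self hab)
      (ih fun a ha b hb => H a (mem_cons_of_mem _ ha) b (mem_cons_of_mem _ hb))

theorem Forall₂.comp {R : α → β → Prop} {S : β → γ → Prop} {l₁ : List α} {l₂ : List β}
    {l₃ : List γ} : Forall₂ R l₁ l₂ → Forall₂ S l₂ l₃ → Forall₂ (Relation.Comp R S) l₁ l₃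
  | .nil, .nil => .nil
  | .cons h hs, .cons h' hs' => .cons ⟨_, h, h'⟩ (hs.comp hs')

theorem Forall₂.map_eq_map {f : α → γ} {l₁ l₂ : List α}
    (h : Forall₂ (fun a b => f a = f b) l₁ l₂) : l₁.map f = l₂.map f := by
  rw [← forall₂_eq_eq_eq]; simpa using h

theorem Lex.append_of_length_eq {r : α → α → Prop} {a b : List α} (h : Lex r a b)
    (hl : a.length = b.length) (s t : List α) : Lex r (a ++ s) (b ++ t) := by
  induction h with
  | nil => simp at hl
  | cons _ ih => exact .cons (ih (by simpa using hl))
  | rel h => exact .rel h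

end List

open List

namespace OTree

@[induction_eliminator]
theorem induction {motive : OTree → Prop}
    (node : ∀ cs, (∀ c ∈ cs, motive c) → motive (.node cs)) : ∀ t, motive t
  | .node cs => node cs fun c _ => induction node c

theorem size_node (cs : List OTree) : (node cs).size = (cs.map size).sum + 1 := by
  rw [size]; congr 2; simp

theorem ws_node (cs : List OTree) : (node cs).ws = (node cs).size :: (cs.map ws).flatten := by
  rw [ws]; congr 2; simp

theorem length_ws (t : OTree) : t.ws.length = t.size := by
  induction t with
  | node cs ih =>
    rw [ws_node, size_node, length_cons, length_flatten, map_map]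
    congr 2
    exact map_congr_left fun c hc => ih c hc

/-- The first entry of a weight sequence is its length, so no weight sequence is a proper prefix
of another. -/
theorem ws_append_lt_ws_append {a b : OTree} (h : a.ws < b.ws) (s t : List ℕ) :
    a.ws ++ s < b.ws ++ t := by
  cases a with | node as => cases b with | node bs =>
  have ha := length_ws (node as)
  have hb := length_ws (node bs)
  rw [ws_node, length_cons] at ha hb
  rw [ws_node, ws_node] at h ⊢
  rw [cons_append, cons_append]
  rcases cons_lt_cons_iff.mp h with hlt | ⟨heq, htail⟩
  · exact cons_lt_cons_iff.mpr (.inl hlt)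
  · exact cons_lt_cons_iff.mpr (.inr ⟨heq, htail.append_of_length_eq (by omega) s t⟩)

theorem ws_node_lt_of_lt {p s t : List OTree} {a b : OTree} (hab : a.ws < b.ws)
    (hsize : (node (p ++ a :: s)).size = (node (p ++ b :: t)).size) :
    (node (p ++ a :: s)).ws < (node (p ++ b :: t)).ws := by
  rw [ws_node, ws_node, hsize, cons_lt_cons_self]
  simp only [map_append, map_cons, flatten_append, flatten_cons]
  exact append_left_lt (ws_append_lt_ws_append hab _ _)

end OTree

open OTree

namespace RIso

theorem node_iff {cs cs' : List OTree} :
    RIso (.node cs) (.node cs') ↔ ∃ l, Forall₂ RIso cs l ∧ l ~ cs' := by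
  constructor
  · rintro ⟨l, hp, hlen, h⟩
    exact ⟨l, forall₂_iff_get.mpr ⟨hlen, fun i h1 h2 => h i h1 h2⟩, hp⟩
  · rintro ⟨l, hl, hp⟩
    exact .node l hp hl.length_eq fun i h1 h2 => hl.get h1 h2

theorem refl (t : OTree) : RIso t t := by
  induction t with
  | node cs ih => exact node_iff.mpr ⟨cs, forall₂_same.mpr ih, .refl cs⟩

instance : Std.Refl RIso := ⟨refl⟩

theorem of_forall₂ {cs cs' : List OTree} (h : Forall₂ RIso cs cs') :
    RIso (.node cs) (.node cs') :=
  node_iff.mpr ⟨cs', h, .refl cs'⟩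

theorem of_perm {cs cs' : List OTree} (h : cs ~ cs') : RIso (.node cs) (.node cs') :=
  node_iff.mpr ⟨cs, forall₂_refl cs, h⟩

theorem symm {t u : OTree} (h : RIso t u) : RIso u t := by
  induction t generalizing u with
  | node cs ih =>
    cases u with | node cs' =>
    obtain ⟨l, hl, hp⟩ := node_iff.mp h
    have hl' : Forall₂ (flip RIso) cs l := hl.imp_of_mem fun c hc d _ hcd => ih c hc hcd
    exact node_iff.mpr (perm_comp_forall₂ hp.symm hl'.flip)

theorem trans {t u v : OTree} (h₁ : RIso t u) (h₂ : RIso u v) : RIso t v := by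
  induction t generalizing u v with
  | node cs ih =>
    cases u with | node ds =>
    cases v with | node es =>
    obtain ⟨l₁, hl₁, hp₁⟩ := node_iff.mp h₁
    obtain ⟨l₂, hl₂, hp₂⟩ := node_iff.mp h₂
    obtain ⟨m, hm, hpm⟩ := perm_comp_forall₂ hp₁ hl₂
    refine node_iff.mpr ⟨m, (hl₁.comp hm).imp_of_mem ?_, hpm.trans hp₂⟩
    rintro c hc d - ⟨e, hce, hed⟩
    exact ih c hc hce hed

theorem size_eq {t u : OTree} (h : RIso t u) : t.size = u.size := by
  induction t generalizing u with
  | node cs ih =>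
    cases u with | node cs' =>
    obtain ⟨l, hl, hp⟩ := node_iff.mp h
    have hsizes : cs.map size = l.map size :=
      (hl.imp_of_mem fun c hc _ _ hcd => ih c hc hcd).map_eq_map
    rw [size_node, size_node, hsizes, (hp.map size).sum_eq]

end RIso

theorem ws_le_of_forall_riso_ws_le {p s t : List OTree} {a b : OTree}
    (hmax : ∀ M, RIso (node (p ++ a :: s)) M → M.ws ≤ (node (p ++ a :: s)).ws)
    (hR : RIso (node (p ++ a :: s)) (node (p ++ b :: t))) : b.ws ≤ a.ws :=
  le_of_not_gt fun hab => (hmax _ hR).not_gt (ws_node_lt_of_lt hab hR.size_eq)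

theorem canonical_of_forall_riso_ws_le {M : OTree} (hmax : ∀ M', RIso M M' → M'.ws ≤ M.ws) :
    Canonical M := by
  induction M with
  | node cs ih =>
    refine .node (isChain_iff_forall_rel_of_append_cons_cons.mpr ?_) fun c hc => ih c hc ?_
    · rintro a b p t rfl
      exact ws_le_of_forall_riso_ws_le hmax (.of_perm ((Perm.swap b a t).append_left p))
    · intro c' hc'
      obtain ⟨p, s, rfl⟩ := append_of_mem hc
      exact ws_le_of_forall_riso_ws_le hmax
        (.of_forall₂ (rel_append (forall₂_refl p) (.cons hc' (forall₂_refl s))))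

theorem sortedGE_map_ws {cs : List OTree} (h : IsChain (fun u v => v.ws ≤ u.ws) cs) :
    (cs.map ws).SortedGE :=
  sortedGE_iff_isChain.mpr (isChain_map _ |>.mpr h)

theorem Canonical.ws_eq {C C' : OTree} (hC : Canonical C) (hC' : Canonical C') (h : RIso C C') :
    C.ws = C'.ws := by
  induction C generalizing C' with
  | node cs ih =>
    cases C' with | node cs' =>
    obtain ⟨hchain, hcs⟩ := hC
    obtain ⟨hchain', hcs'⟩ := hC'
    obtain ⟨l, hl, hp⟩ := RIso.node_iff.mp h
    have hws : cs.map ws = l.map ws := (hl.imp_of_mem fun c hc d hd hcd =>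
      ih c hc (hcs c hc) (hcs' d (hp.subset hd)) hcd).map_eq_map
    have hsorted : cs.map ws = cs'.map ws :=
      (hws ▸ hp.map ws).eq_of_sortedGE (sortedGE_map_ws hchain) (sortedGE_map_ws hchain')
    rw [ws_node, ws_node, h.size_eq, hsorted]

theorem stmt7 (R M : OTree) (hM : RIso R M)
    (hmax : ∀ R' : OTree, RIso R R' → R'.ws ≤ M.ws) :
    Canonical M ∧ ∀ C : OTree, Canonical C → RIso R C → C.ws = M.ws := by
  have hcan : Canonical M := canonical_of_forall_riso_ws_le fun M' h => hmax M' (hM.trans h)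
  exact ⟨hcan, fun C hC hRC => hC.ws_eq hcan (hRC.symm.trans hM)⟩
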